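/- Every consistent map c : J → ℝ extends to a unique charge μ on the ring R generated by the sets Y(K,v), satisfying μ(Y(K,v)) = c(K,v) for all (K,v) ∈ J. -/

import Mathlib

/-- Abstract axiomatization of the space `Y` of all places of `\overline{ℚ}`: a directed
system `F` of number fields (ordered by field extension `le`), the places `Pl K` of each
number field, the map `over` sending a place `w` of `L` to the place of `K` it divides, and
the basic compact open sets `Y(K,v) = {y ∈ Y : y ∣ v}` forming a basis of the totally
disconnected Hausdorff topology on `Y`. -/
structure PlaceSystem where
  /-- the number fields -/
  F : Type
  /-- `le K L` means `L/K` is a (finite) field extension -/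
  le : F → F → Prop
  le_refl : ∀ K, le K K
  /-- any two number fields admit a compositum -/
  directed : ∀ K L, ∃ M, le K M ∧ le L M
  /-- the places of a number field -/
  Pl : F → Type
  /-- `over h w` is the unique place of `K` divided by the place `w` of `L` -/
  overMap : ∀ {K L : F}, le K L → Pl L → Pl K
  /-- only finitely many places of `L` divide a given place of `K` -/
  finiteFibers : ∀ {K L : F} (h : le K L) (v : Pl K), {w : Pl L | overMap h w = v}.Finite
  /-- the set of places of `\overline{ℚ}` -/
  Y : Type
  top : TopologicalSpace Y
  t2 : @T2Space Y top
  /-- the basic set `Y(K,v)` of places of `\overline{ℚ}` dividing `v` -/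
  Yset : (K : F) → Pl K → Set Y
  Yset_nonempty : ∀ (K : F) (v : Pl K), (Yset K v).Nonempty
  Yset_compact : ∀ (K : F) (v : Pl K), @IsCompact Y top (Yset K v)
  Yset_open : ∀ (K : F) (v : Pl K), @IsOpen Y top (Yset K v)
  Yset_disjoint : ∀ (K : F) (v w : Pl K), v ≠ w → Disjoint (Yset K v) (Yset K w)
  /-- `Y(K,v)` is the disjoint union of the `Y(L,w)` over the places `w ∣ v` of `L` -/
  Yset_decomp : ∀ {K L : F} (h : le K L) (v : Pl K),
    Yset K v = ⋃ w ∈ {w : Pl L | overMap h w = v}, Yset L w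
  basis : @TopologicalSpace.IsTopologicalBasis Y top
    {A : Set Y | ∃ (K : F) (v : Pl K), A = Yset K v}
  cover : (⋃ (K : F) (v : Pl K), Yset K v) = Set.univ
  noncompact : ¬ @IsCompact Y top Set.univ

/-- A map `c` on pairs `(K,v)` is consistent if `c(K,v) = Σ_{w ∣ v} c(L,w)` for every finite
extension `L/K`. -/
def PlaceSystem.Consistent (S : PlaceSystem) (c : ∀ K : S.F, S.Pl K → ℝ) : Prop :=
  ∀ {K L : S.F} (h : S.le K L) (v : S.Pl K),
    c K v = ∑ᶠ (w : S.Pl L) (_ : S.overMap h w = v), c L w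

/-- `R`, the smallest ring of sets on `Y` containing all the basic sets `Y(K,v)`. -/
def PlaceSystem.ringR (S : PlaceSystem) : Set (Set S.Y) :=
  ⋂₀ {R : Set (Set S.Y) |
    MeasureTheory.IsSetRing R ∧ ∀ (K : S.F) (v : S.Pl K), S.Yset K v ∈ R}

/-- A charge on `R`: a finitely additive real-valued set function vanishing on `∅`. -/
def PlaceSystem.IsCharge (S : PlaceSystem) (μ : Set S.Y → ℝ) : Prop :=
  μ ∅ = 0 ∧ ∀ A ∈ S.ringR, ∀ B ∈ S.ringR, Disjoint A B → μ (A ∪ B) = μ A + μ B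

/-!
Over a single field `K` the basic sets `Y(K,v)` are nonempty and pairwise disjoint, so a finite
union `⋃ v ∈ T, Y(K,v)` determines `T`, and the only possible value of a charge on it is
`∑ v ∈ T, c(K,v)`. Any two such unions can be rewritten over a common extension `M` by splitting
each `Y(K,v)` into the `Y(M,w)` with `w ∣ v`; consistency of `c` says exactly that this does not
change the sum, so the value is well defined. These unions form a ring of sets containing every
`Y(K,v)`, hence they make up all of `R`, and additivity is additivity of finite sums over
disjoint index sets.
-/

namespace PlaceSystem

open scoped Classical

variable (S : PlaceSystem)

noncomputable def fiber {K L : S.F} (h : S.le K L) (v : S.Pl K) : Finset (S.Pl L) :=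
  (S.finiteFibers h v).toFinset

@[simp]
lemma mem_fiber {K L : S.F} (h : S.le K L) (v : S.Pl K) (w : S.Pl L) :
    w ∈ S.fiber h v ↔ S.overMap h w = v := by
  simp [fiber]

lemma pairwiseDisjoint_fiber {K L : S.F} (h : S.le K L) (T : Finset (S.Pl K)) :
    (T : Set (S.Pl K)).PairwiseDisjoint (S.fiber h) := by
  intro v₁ _ v₂ _ hne
  simp only [Function.onFun, Finset.disjoint_left, mem_fiber]
  rintro w rfl rfl
  exact hne rfl

section

variable {S}

lemma Consistent.eq_sum_fiber {c : ∀ K : S.F, S.Pl K → ℝ} (hc : S.Consistent c)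
    {K L : S.F} (h : S.le K L) (v : S.Pl K) : c K v = ∑ w ∈ S.fiber h v, c L w := by
  rw [hc h v]
  exact finsum_cond_eq_sum_of_cond_iff (c L) fun _ => (S.mem_fiber h v _).symm

lemma Consistent.sum_biUnion_fiber {c : ∀ K : S.F, S.Pl K → ℝ} (hc : S.Consistent c)
    {K L : S.F} (h : S.le K L) (T : Finset (S.Pl K)) :
    ∑ w ∈ T.biUnion (S.fiber h), c L w = ∑ v ∈ T, c K v := by
  rw [Finset.sum_biUnion (S.pairwiseDisjoint_fiber h T)]
  exact Finset.sum_congr rfl fun v _ => (hc.eq_sum_fiber h v).symm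

end

def YsetUnion (K : S.F) (T : Finset (S.Pl K)) : Set S.Y := ⋃ v ∈ T, S.Yset K v

@[simp]
lemma YsetUnion_empty (K : S.F) : S.YsetUnion K ∅ = ∅ := by
  simp [YsetUnion]

@[simp]
lemma YsetUnion_singleton (K : S.F) (v : S.Pl K) : S.YsetUnion K {v} = S.Yset K v := by
  simp [YsetUnion]

lemma YsetUnion_insert (K : S.F) (v : S.Pl K) (T : Finset (S.Pl K)) :
    S.YsetUnion K (insert v T) = S.Yset K v ∪ S.YsetUnion K T :=
  Finset.set_biUnion_insert v T _

lemma YsetUnion_union (K : S.F) (T₁ T₂ : Finset (S.Pl K)) :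
    S.YsetUnion K (T₁ ∪ T₂) = S.YsetUnion K T₁ ∪ S.YsetUnion K T₂ :=
  Finset.set_biUnion_union T₁ T₂ _

lemma pairwiseDisjoint_Yset (K : S.F) (T : Set (S.Pl K)) : T.PairwiseDisjoint (S.Yset K) :=
  fun v _ w _ hne => S.Yset_disjoint K v w hne

lemma YsetUnion_sdiff (K : S.F) (T₁ T₂ : Finset (S.Pl K)) :
    S.YsetUnion K (T₁ \ T₂) = S.YsetUnion K T₁ \ S.YsetUnion K T₂ := by
  simp only [YsetUnion, ← Finset.mem_coe, Finset.coe_sdiff]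
  exact (Set.biUnion_sdiff_biUnion_eq (S.pairwiseDisjoint_Yset K _)).symm

lemma Yset_subset_YsetUnion_iff (K : S.F) (w : S.Pl K) (T : Finset (S.Pl K)) :
    S.Yset K w ⊆ S.YsetUnion K T ↔ w ∈ T := by
  refine ⟨fun hsub => ?_, fun hw => Set.subset_biUnion_of_mem (u := S.Yset K) hw⟩
  obtain ⟨y, hy⟩ := S.Yset_nonempty K w
  obtain ⟨v, hv, hyv⟩ := Set.mem_iUnion₂.1 (hsub hy)
  by_contra hw
  have hne : v ≠ w := fun hvw => hw (hvw ▸ hv)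
  exact Set.disjoint_left.1 (S.Yset_disjoint K v w hne) hyv hy

lemma YsetUnion_injective (K : S.F) : Function.Injective (S.YsetUnion K) := by
  intro T₁ T₂ hT
  ext w
  rw [← S.Yset_subset_YsetUnion_iff, ← S.Yset_subset_YsetUnion_iff, hT]

lemma disjoint_of_disjoint_YsetUnion {K : S.F} {T₁ T₂ : Finset (S.Pl K)}
    (hd : Disjoint (S.YsetUnion K T₁) (S.YsetUnion K T₂)) : Disjoint T₁ T₂ := by
  refine Finset.disjoint_left.2 fun w h₁ h₂ => ?_
  obtain ⟨y, hy⟩ := S.Yset_nonempty K w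
  exact Set.disjoint_left.1 hd ((S.Yset_subset_YsetUnion_iff K w T₁).2 h₁ hy)
    ((S.Yset_subset_YsetUnion_iff K w T₂).2 h₂ hy)

lemma YsetUnion_biUnion_fiber {K L : S.F} (h : S.le K L) (T : Finset (S.Pl K)) :
    S.YsetUnion L (T.biUnion (S.fiber h)) = S.YsetUnion K T := by
  simp only [YsetUnion, Finset.set_biUnion_biUnion]
  refine Set.iUnion₂_congr fun v _ => ?_
  rw [S.Yset_decomp h v]
  simp

lemma sum_eq_of_YsetUnion_eq {c : ∀ K : S.F, S.Pl K → ℝ} (hc : S.Consistent c)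
    {K₁ K₂ : S.F} {T₁ : Finset (S.Pl K₁)} {T₂ : Finset (S.Pl K₂)}
    (hU : S.YsetUnion K₁ T₁ = S.YsetUnion K₂ T₂) : ∑ v ∈ T₁, c K₁ v = ∑ v ∈ T₂, c K₂ v := by
  obtain ⟨M, h₁, h₂⟩ := S.directed K₁ K₂
  have hM : T₁.biUnion (S.fiber h₁) = T₂.biUnion (S.fiber h₂) := S.YsetUnion_injective M <| by
    rw [S.YsetUnion_biUnion_fiber, S.YsetUnion_biUnion_fiber, hU]
  rw [← hc.sum_biUnion_fiber h₁, ← hc.sum_biUnion_fiber h₂, hM]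

def YsetUnions : Set (Set S.Y) := {A | ∃ K T, A = S.YsetUnion K T}

lemma YsetUnion_mem_YsetUnions (K : S.F) (T : Finset (S.Pl K)) :
    S.YsetUnion K T ∈ S.YsetUnions :=
  ⟨K, T, rfl⟩

lemma Yset_mem_YsetUnions (K : S.F) (v : S.Pl K) : S.Yset K v ∈ S.YsetUnions :=
  ⟨K, {v}, (S.YsetUnion_singleton K v).symm⟩

lemma exists_common_field {A B : Set S.Y} (hA : A ∈ S.YsetUnions) (hB : B ∈ S.YsetUnions) :
    ∃ (M : S.F) (T₁ T₂ : Finset (S.Pl M)), A = S.YsetUnion M T₁ ∧ B = S.YsetUnion M T₂ := by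
  obtain ⟨K₁, T₁, rfl⟩ := hA
  obtain ⟨K₂, T₂, rfl⟩ := hB
  obtain ⟨M, h₁, h₂⟩ := S.directed K₁ K₂
  exact ⟨M, _, _, (S.YsetUnion_biUnion_fiber h₁ T₁).symm, (S.YsetUnion_biUnion_fiber h₂ T₂).symm⟩

-- `Y` is not compact, so it is not the empty union of basic sets.
lemma nonempty_F : Nonempty S.F := by
  by_contra hF
  rw [not_nonempty_iff] at hF
  have huniv : (Set.univ : Set S.Y) = ∅ := by rw [← S.cover, Set.iUnion_of_empty]
  exact S.noncompact (huniv ▸ @isCompact_empty _ S.top)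

lemma isSetRing_YsetUnions : MeasureTheory.IsSetRing S.YsetUnions where
  empty_mem := by
    obtain ⟨K⟩ := S.nonempty_F
    exact ⟨K, ∅, (S.YsetUnion_empty K).symm⟩
  union_mem A B hA hB := by
    obtain ⟨M, T₁, T₂, rfl, rfl⟩ := S.exists_common_field hA hB
    exact ⟨M, T₁ ∪ T₂, (S.YsetUnion_union M T₁ T₂).symm⟩
  sdiff_mem A B hA hB := by
    obtain ⟨M, T₁, T₂, rfl, rfl⟩ := S.exists_common_field hA hB
    exact ⟨M, T₁ \ T₂, (S.YsetUnion_sdiff M T₁ T₂).symm⟩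

lemma ringR_eq_YsetUnions : S.ringR = S.YsetUnions := by
  apply le_antisymm
  · exact fun A hA => hA _ ⟨S.isSetRing_YsetUnions, fun K v => S.Yset_mem_YsetUnions K v⟩
  · rintro A ⟨K, T, rfl⟩ R ⟨hR, hY⟩
    exact hR.biUnion_mem T fun v _ => hY K v

section

variable {S}

lemma IsCharge.apply_YsetUnion {μ : Set S.Y → ℝ} {c : ∀ K : S.F, S.Pl K → ℝ}
    (hμ : S.IsCharge μ) (hμc : ∀ (K : S.F) (v : S.Pl K), μ (S.Yset K v) = c K v)
    (K : S.F) (T : Finset (S.Pl K)) : μ (S.YsetUnion K T) = ∑ v ∈ T, c K v := by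
  induction T using Finset.induction_on with
  | empty => simpa using hμ.1
  | insert v T hv ih =>
    have hd : Disjoint (S.Yset K v) (S.YsetUnion K T) :=
      Set.disjoint_iUnion₂_right.2 fun w hw => S.Yset_disjoint K v w fun hvw => hv (hvw ▸ hw)
    have hmem : ∀ {A}, A ∈ S.YsetUnions → A ∈ S.ringR := fun hA => S.ringR_eq_YsetUnions ▸ hA
    rw [S.YsetUnion_insert, hμ.2 _ (hmem (S.Yset_mem_YsetUnions K v)) _
      (hmem (S.YsetUnion_mem_YsetUnions K T)) hd, ih, hμc, Finset.sum_insert hv]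

end

noncomputable def extendCharge (c : ∀ K : S.F, S.Pl K → ℝ) (A : Set S.Y) : ℝ :=
  if h : A ∈ S.YsetUnions then ∑ v ∈ h.choose_spec.choose, c h.choose v else 0

lemma extendCharge_YsetUnion {c : ∀ K : S.F, S.Pl K → ℝ} (hc : S.Consistent c) (K : S.F)
    (T : Finset (S.Pl K)) : S.extendCharge c (S.YsetUnion K T) = ∑ v ∈ T, c K v := by
  have h := S.YsetUnion_mem_YsetUnions K T
  rw [extendCharge, dif_pos h]
  exact S.sum_eq_of_YsetUnion_eq hc h.choose_spec.choose_spec.symm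

lemma extendCharge_of_notMem_ringR (c : ∀ K : S.F, S.Pl K → ℝ) {A : Set S.Y}
    (hA : A ∉ S.ringR) : S.extendCharge c A = 0 :=
  dif_neg (S.ringR_eq_YsetUnions ▸ hA)

lemma isCharge_extendCharge {c : ∀ K : S.F, S.Pl K → ℝ} (hc : S.Consistent c) :
    S.IsCharge (S.extendCharge c) := by
  refine ⟨?_, fun A hA B hB hAB => ?_⟩
  · obtain ⟨K⟩ := S.nonempty_F
    simpa using S.extendCharge_YsetUnion hc K ∅
  rw [S.ringR_eq_YsetUnions] at hA hB
  obtain ⟨M, T₁, T₂, rfl, rfl⟩ := S.exists_common_field hA hB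
  rw [← S.YsetUnion_union, S.extendCharge_YsetUnion hc, S.extendCharge_YsetUnion hc,
    S.extendCharge_YsetUnion hc, Finset.sum_union (S.disjoint_of_disjoint_YsetUnion hAB)]

end PlaceSystem

/-- Every consistent map extends to a unique charge `μ` on the ring `R` generated by the
basic sets `Y(K,v)` (normalized to vanish off `R`), with `μ(Y(K,v)) = c(K,v)`. -/
theorem stmt_8 (S : PlaceSystem) (c : ∀ K : S.F, S.Pl K → ℝ) (hc : S.Consistent c) :
    ∃! μ : Set S.Y → ℝ, S.IsCharge μ ∧ (∀ A ∉ S.ringR, μ A = 0) ∧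
      ∀ (K : S.F) (v : S.Pl K), μ (S.Yset K v) = c K v := by
  refine ⟨S.extendCharge c, ⟨S.isCharge_extendCharge hc,
    fun A hA => S.extendCharge_of_notMem_ringR c hA, fun K v => ?_⟩, ?_⟩
  · simpa using S.extendCharge_YsetUnion hc K {v}
  rintro μ ⟨hμ, hμ_off, hμc⟩
  funext A
  by_cases hA : A ∈ S.ringR
  · obtain ⟨K, T, rfl⟩ := S.ringR_eq_YsetUnions ▸ hA
    rw [hμ.apply_YsetUnion hμc, S.extendCharge_YsetUnion hc]
  · rw [hμ_off A hA, S.extendCharge_of_notMem_ringR c hA]
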